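/- Let S = k[α_0, α_1, α_2], let a ⊆ S be an ideal, and let < be a monomial order on S. Then the initial ideal of the saturation of a is contained in the saturation of the initial ideal of a: in_<(sat(a)) ⊆ sat(in_<(a)), where saturation is with respect to m = (α_0, α_1, α_2). -/

import Mathlib

open MvPolynomial

/-- The irrelevant ideal `(α₀, α₁, α₂)` of `S = k[α₀, α₁, α₂]`. -/
noncomputable def irrel (k : Type*) [Field k] : Ideal (MvPolynomial (Fin 3) k) :=
  Ideal.span (Set.range X)

/-- The saturation of an ideal with respect to the irrelevant ideal:
`sat a = {f | ∃ N, 𝔪^N · f ⊆ a}`. -/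
noncomputable def sat (k : Type*) [Field k]
    (a : Ideal (MvPolynomial (Fin 3) k)) : Ideal (MvPolynomial (Fin 3) k) :=
  ⨆ N : ℕ, Submodule.colon a ((((irrel k) ^ N : Ideal (MvPolynomial (Fin 3) k))) : Set (MvPolynomial (Fin 3) k))

/-- The initial ideal of `a` with respect to a monomial order: the ideal generated by
the leading monomials (the monomials whose exponent is maximal in the support) of the
nonzero elements of `a`. -/
noncomputable def initIdeal (k : Type*) [Field k] (m : MonomialOrder (Fin 3))
    (a : Ideal (MvPolynomial (Fin 3) k)) : Ideal (MvPolynomial (Fin 3) k) :=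
  Ideal.span {g | ∃ f ∈ a, f ≠ 0 ∧ ∃ c : Fin 3 →₀ ℕ, c ∈ f.support ∧
    (∀ c' ∈ f.support, m.toSyn c' ≤ m.toSyn c) ∧ g = monomial c (1 : k)}

/-!
`𝔪^N` is generated by monomials, and multiplication by a monomial shifts leading monomials:
`in(X^e f) = X^e in(f)`. Hence if `𝔪^N f ⊆ a`, then for every monomial generator `X^e` of `𝔪^N`
the monomial `X^e in(f) = in(X^e f)` lies in `in(a)`, i.e. `𝔪^N in(f) ⊆ in(a)`.
-/

open scoped Pointwise

theorem MonomialOrder.degree_eq_of_forall_le {σ R : Type*} [CommSemiring R]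
    {m : MonomialOrder σ} {f : MvPolynomial σ R} {c : σ →₀ ℕ} (hc : c ∈ f.support)
    (hmax : ∀ c' ∈ f.support, m.toSyn c' ≤ m.toSyn c) : m.degree f = c :=
  m.toSyn.injective <| le_antisymm
    (hmax _ (m.degree_mem_support_iff f |>.mpr (support_nonempty.mp ⟨c, hc⟩))) (m.le_degree hc)

theorem MvPolynomial.range_X_pow_subset_range_monomial {σ R : Type*} [CommSemiring R] (N : ℕ) :
    Set.range (X : σ → MvPolynomial σ R) ^ N ⊆ Set.range (monomial · (1 : R)) :=
  Submonoid.pow_subset (S := MonoidHom.mrange (monomialOneHom R σ)) <|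
    Set.range_subset_iff.mpr fun i ↦ ⟨Multiplicative.ofAdd (Finsupp.single i 1), rfl⟩

section

variable {k : Type*} [Field k]

theorem mem_sat_iff {a : Ideal (MvPolynomial (Fin 3) k)} {f : MvPolynomial (Fin 3) k} :
    f ∈ sat k a ↔ ∃ N : ℕ, f ∈ a.colon (irrel k ^ N : Ideal (MvPolynomial (Fin 3) k)) :=
  Submodule.mem_iSup_of_directed _ <| Monotone.directed_le fun _ _ hNM ↦
    Submodule.colon_mono le_rfl (Ideal.pow_le_pow_right hNM)

theorem colon_irrel_pow (a : Ideal (MvPolynomial (Fin 3) k)) (N : ℕ) :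
    a.colon (irrel k ^ N : Ideal (MvPolynomial (Fin 3) k)) = a.colon (Set.range X ^ N) := by
  rw [irrel, Ideal.span, Submodule.span_pow, Ideal.colon_span]

variable {m : MonomialOrder (Fin 3)} {a : Ideal (MvPolynomial (Fin 3) k)}

theorem monomial_degree_mem_initIdeal {f : MvPolynomial (Fin 3) k} (hf : f ∈ a) (hf0 : f ≠ 0) :
    monomial (m.degree f) (1 : k) ∈ initIdeal k m a :=
  Ideal.subset_span ⟨f, hf, hf0, _, (m.degree_mem_support_iff f).mpr hf0,
    fun _ hc' ↦ m.le_degree hc', rfl⟩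

theorem monomial_degree_mem_colon_initIdeal {T : Set (MvPolynomial (Fin 3) k)}
    (hT : T ⊆ Set.range (monomial · (1 : k))) {f : MvPolynomial (Fin 3) k}
    (hf : f ∈ a.colon T) (hf0 : f ≠ 0) :
    monomial (m.degree f) (1 : k) ∈ (initIdeal k m a).colon T := by
  refine Submodule.mem_colon.mpr fun p hp ↦ ?_
  have hfp := Submodule.mem_colon.mp hf p hp
  obtain ⟨e, rfl⟩ := hT hp
  rw [smul_eq_mul] at hfp ⊢
  have he0 : monomial e (1 : k) ≠ 0 := monomial_eq_zero.not.mpr one_ne_zero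
  have hdeg : m.degree (f * monomial e 1) = m.degree f + e := by
    classical
    rw [m.degree_mul hf0 he0, m.degree_monomial, if_neg one_ne_zero]
  have hmem := monomial_degree_mem_initIdeal (m := m) hfp (mul_ne_zero hf0 he0)
  rwa [hdeg, ← mul_one (1 : k), ← monomial_mul] at hmem

end

theorem initIdeal_sat_le_sat_initIdeal_general (k : Type*) [Field k]
    (m : MonomialOrder (Fin 3)) (a : Ideal (MvPolynomial (Fin 3) k)) :
    initIdeal k m (sat k a) ≤ sat k (initIdeal k m a) := by
  rw [initIdeal, Ideal.span_le]
  rintro _ ⟨f, hf, hf0, c, hc, hmax, rfl⟩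
  obtain ⟨N, hN⟩ := mem_sat_iff.mp hf
  rw [← m.degree_eq_of_forall_le hc hmax]
  refine mem_sat_iff.mpr ⟨N, ?_⟩
  rw [colon_irrel_pow] at hN ⊢
  exact monomial_degree_mem_colon_initIdeal (range_X_pow_subset_range_monomial N) hN hf0

theorem initIdeal_sat_le_sat_initIdeal (k : Type*) [Field k] [IsAlgClosed k]
    (m : MonomialOrder (Fin 3)) (a : Ideal (MvPolynomial (Fin 3) k)) :
    initIdeal k m (sat k a) ≤ sat k (initIdeal k m a) :=
  initIdeal_sat_le_sat_initIdeal_general k m a
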